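/- Let 1 ≤ p < ∞ and let (X_j)_{j=1}^∞ be a sequence of nonzero real Banach spaces. Then t(ℓ_p(X_j)) ≥ sup_j ((t(X_j) − 1)^p + 1)^{1/p}. Moreover, if sup_j t(X_j) = 2, then t(ℓ_p(X_j)) = 2^{1/p}. -/

import Mathlib

/-!
Let `y` be a unit vector of `ℓ_p(X_j)` within `r` of the vectors `e_j x_i` (`x_i` in the sphere of
`X_j`), and put `a = ‖y(j)‖ ≤ 1`. The identity
`‖y - e_j x_i‖^p = ‖y(j) - x_i‖^p + 1 - a^p` together with superadditivity of `t ↦ t^p` gives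
`‖y(j) - x_i‖ ≤ (r^p - 1)^(1/p) + a`, and pushing `y(j)` radially onto the sphere costs a further
`1 - a`; hence `t(X_j) ≤ (r^p - 1)^(1/p) + 1`, which is the lower bound.
Conversely, given unit vectors `x_i` of `ℓ_p(X_j)`, pick a coordinate `j` where all `x_i(j)` are
small and a unit vector `u` of `X_j`: then `‖x_i - e_j u‖^p` is at most about `1 + 1`, so
`t(ℓ_p(X_j)) ≤ 2^(1/p)`. The function `t ↦ ((t - 1)^p + 1)^(1/p)` is continuous, so if
`sup_j t(X_j) = 2` the lower bounds approach its value `2^(1/p)` at `2`.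
-/

open ENNReal

/-- The thinness index `t(X)` of a normed space. -/
noncomputable def thinness (X : Type*) [NormedAddCommGroup X] : ℝ :=
  sInf {r : ℝ | 0 < r ∧ ∀ (n : ℕ) (x : Fin n → X), (∀ i, ‖x i‖ = 1) →
    ∀ ε : ℝ, 0 < ε → ∃ y : X, ‖y‖ = 1 ∧ ∀ i, ‖x i - y‖ < r + ε}

open Filter Topology

def thinnessRadii (X : Type*) [NormedAddCommGroup X] : Set ℝ :=
  {r : ℝ | 0 < r ∧ ∀ (n : ℕ) (x : Fin n → X), (∀ i, ‖x i‖ = 1) →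
    ∀ ε : ℝ, 0 < ε → ∃ y : X, ‖y‖ = 1 ∧ ∀ i, ‖x i - y‖ < r + ε}

section Thinness

variable {X : Type*} [NormedAddCommGroup X]

theorem bddBelow_thinnessRadii : BddBelow (thinnessRadii X) := ⟨0, fun _ hr => hr.1.le⟩

theorem two_mem_thinnessRadii {u : X} (hu : ‖u‖ = 1) : 2 ∈ thinnessRadii X := by
  refine ⟨two_pos, fun n x hx ε hε => ⟨u, hu, fun i => ?_⟩⟩
  calc ‖x i - u‖ ≤ ‖x i‖ + ‖u‖ := norm_sub_le _ _
    _ < 2 + ε := by rw [hx i, hu]; linarith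

theorem le_thinness {u : X} (hu : ‖u‖ = 1) {c : ℝ} (h : ∀ r ∈ thinnessRadii X, c ≤ r) :
    c ≤ thinness X :=
  le_csInf ⟨2, two_mem_thinnessRadii hu⟩ h

theorem thinness_le_two {u : X} (hu : ‖u‖ = 1) : thinness X ≤ 2 :=
  csInf_le bddBelow_thinnessRadii (two_mem_thinnessRadii hu)

theorem thinness_le_of_forall {s : ℝ} (hs : 0 ≤ s)
    (h : ∀ (n : ℕ) (x : Fin n → X), (∀ i, ‖x i‖ = 1) →
      ∀ ε : ℝ, 0 < ε → ∃ y : X, ‖y‖ = 1 ∧ ∀ i, ‖x i - y‖ ≤ s + ε) :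
    thinness X ≤ s := by
  refine le_of_forall_pos_le_add fun δ hδ =>
    csInf_le bddBelow_thinnessRadii ⟨by linarith, fun n x hx ε hε => ?_⟩
  obtain ⟨y, hy, hxy⟩ := h n x hx ε hε
  exact ⟨y, hy, fun i => by linarith [hxy i]⟩

variable [NormedSpace ℝ X]

theorem one_le_of_mem_thinnessRadii {u : X} (hu : ‖u‖ = 1) {r : ℝ} (hr : r ∈ thinnessRadii X) :
    1 ≤ r := by
  refine le_of_forall_pos_le_add fun ε hε => ?_
  obtain ⟨y, -, hy⟩ := hr.2 2 ![u, -u] (by simp [hu]) ε hε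
  have h₀ : ‖u - y‖ < r + ε := hy 0
  have h₁ : ‖-u - y‖ < r + ε := hy 1
  have h₂ : ‖(u - y) - (-u - y)‖ = 2 := by
    rw [show (u - y) - (-u - y) = (2 : ℝ) • u by rw [two_smul]; abel, norm_smul, hu]
    norm_num
  linarith [h₂ ▸ norm_sub_le (u - y) (-u - y)]

theorem one_le_thinness {u : X} (hu : ‖u‖ = 1) : 1 ≤ thinness X :=
  le_thinness hu fun _ => one_le_of_mem_thinnessRadii hu

end Thinness

theorem exists_norm_eq_one_norm_sub_le {E : Type*} [NormedAddCommGroup E] [NormedSpace ℝ E]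
    [Nontrivial E] {y : E} (hy : ‖y‖ ≤ 1) : ∃ z : E, ‖z‖ = 1 ∧ ‖y - z‖ ≤ 1 - ‖y‖ := by
  rcases eq_or_ne y 0 with rfl | hy₀
  · obtain ⟨z, hz⟩ := exists_norm_eq E zero_le_one
    exact ⟨z, hz, by simp [hz]⟩
  refine ⟨‖y‖⁻¹ • y, norm_smul_inv_norm hy₀, le_of_eq ?_⟩
  have hpos : 0 < ‖y‖ := norm_pos_iff.2 hy₀
  have hinv : 1 ≤ ‖y‖⁻¹ := (one_le_inv₀ hpos).2 hy
  rw [show y - ‖y‖⁻¹ • y = (1 - ‖y‖⁻¹) • y by rw [sub_smul, one_smul], norm_smul,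
    Real.norm_eq_abs, abs_of_nonpos (by linarith), neg_sub, sub_mul, inv_mul_cancel₀ hpos.ne',
    one_mul]

namespace lp

variable {ι : Type*} {E : ι → Type*} [∀ i, NormedAddCommGroup (E i)] {p : ℝ≥0∞}

theorem norm_sub_single_rpow_add [DecidableEq ι] (hp : 0 < p.toReal) (f : lp E p) (i : ι)
    (x : E i) :
    ‖f - lp.single p i x‖ ^ p.toReal + ‖f i‖ ^ p.toReal =
      ‖f i - x‖ ^ p.toReal + ‖f‖ ^ p.toReal := by
  have hupdate : HasSum (Function.update (fun k => ‖f k‖ ^ p.toReal) i (‖f i - x‖ ^ p.toReal))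
      (‖f - lp.single p i x‖ ^ p.toReal) := by
    convert hasSum_norm hp (f - lp.single p i x) using 1
    funext k
    rcases eq_or_ne k i with rfl | hk
    · simp
    · simp [Function.update_of_ne hk, Pi.single_eq_of_ne hk]
  linarith [(hasSum_norm hp f).update' i _ hupdate]

theorem tendsto_norm_apply_cofinite (hp : 0 < p.toReal) (f : lp E p) :
    Tendsto (fun i => ‖f i‖) cofinite (𝓝 0) := by
  have h := (hasSum_norm hp f).summable.tendsto_cofinite_zero.rpow_const
    (p := p.toReal⁻¹) (Or.inr (by positivity))
  simpa [Real.zero_rpow (inv_ne_zero hp.ne'), Real.rpow_rpow_inv (norm_nonneg _) hp.ne'] using h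

variable [Fact (1 ≤ p)] [∀ i, NormedSpace ℝ (E i)] [∀ i, Nontrivial (E i)]

theorem thinness_sub_one_rpow_add_one_le (hp : p ≠ ⊤) (j : ι) {r r' : ℝ}
    (hr : r ∈ thinnessRadii (lp E p)) (hrr' : r < r') :
    (thinness (E j) - 1) ^ p.toReal + 1 ≤ r' ^ p.toReal := by
  classical
  set q := p.toReal
  have hq : 1 ≤ q := (ENNReal.dichotomy p).resolve_left hp
  have hq₀ : 0 < q := by linarith
  have hp₀ : 0 < p := zero_lt_one.trans_le Fact.out
  obtain ⟨u₀, hu₀⟩ := exists_norm_eq (E j) zero_le_one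
  have hr₁ : 1 ≤ r := one_le_of_mem_thinnessRadii (u := lp.single p j u₀)
    (by rw [lp.norm_single hp₀, hu₀]) hr
  have hr'q : 0 ≤ r' ^ q - 1 := by linarith [Real.one_le_rpow (hr₁.trans hrr'.le) hq₀.le]
  set s := (r' ^ q - 1) ^ q⁻¹
  have hs₀ : 0 ≤ s := Real.rpow_nonneg hr'q _
  have hs : s ^ q = r' ^ q - 1 := Real.rpow_inv_rpow hr'q hq₀.ne'
  suffices h : thinness (E j) - 1 ≤ s by
    linarith [Real.rpow_le_rpow (sub_nonneg.2 (one_le_thinness hu₀)) h hq₀.le]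
  rw [sub_le_iff_le_add]
  refine thinness_le_of_forall (by linarith) fun n u hu ε hε => ?_
  obtain ⟨y, hy, hyu⟩ := hr.2 n (fun i => lp.single p j (u i))
    (fun i => by rw [lp.norm_single hp₀, hu i]) (r' - r) (by linarith)
  obtain ⟨z, hz, hyz⟩ := exists_norm_eq_one_norm_sub_le (hy ▸ norm_apply_le_norm hp₀.ne' y j)
  refine ⟨z, hz, fun i => ?_⟩
  have hclose : ‖y - lp.single p j (u i)‖ ^ q ≤ r' ^ q :=
    Real.rpow_le_rpow (norm_nonneg _) (by rw [norm_sub_rev]; linarith [hyu i]) hq₀.le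
  have hcoord : ‖y j - u i‖ ^ q ≤ s ^ q + ‖y j‖ ^ q := by
    have := norm_sub_single_rpow_add hq₀ y j (u i)
    rw [hy, Real.one_rpow] at this
    linarith
  have hcoord' : ‖y j - u i‖ ≤ s + ‖y j‖ :=
    (Real.rpow_le_rpow_iff (norm_nonneg _) (by positivity) hq₀).1
      (hcoord.trans (Real.add_rpow_le_rpow_add (by positivity) (norm_nonneg _) hq))
  calc ‖u i - z‖ ≤ ‖u i - y j‖ + ‖y j - z‖ := norm_sub_le_norm_sub_add_norm_sub _ _ _
    _ ≤ s + 1 + ε := by rw [norm_sub_rev]; linarith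

theorem le_thinness_lp (hp : p ≠ ⊤) (j : ι) :
    ((thinness (E j) - 1) ^ p.toReal + 1) ^ (1 / p.toReal) ≤ thinness (lp E p) := by
  classical
  have hq₀ : 0 < p.toReal := by linarith [(ENNReal.dichotomy p).resolve_left hp]
  obtain ⟨u₀, hu₀⟩ := exists_norm_eq (E j) zero_le_one
  refine le_thinness (u := lp.single p j u₀)
    (by rw [lp.norm_single (zero_lt_one.trans_le Fact.out), hu₀]) fun r hr => ?_
  have hbase : 0 ≤ (thinness (E j) - 1) ^ p.toReal + 1 := by
    linarith [Real.rpow_nonneg (sub_nonneg.2 (one_le_thinness hu₀)) p.toReal]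
  refine le_of_forall_pos_le_add fun ε hε => ?_
  rw [one_div, Real.rpow_inv_le_iff_of_pos hbase (by linarith [hr.1]) hq₀]
  exact thinness_sub_one_rpow_add_one_le hp j hr (by linarith)

theorem thinness_lp_le [Infinite ι] (hp : p ≠ ⊤) : thinness (lp E p) ≤ 2 ^ (1 / p.toReal) := by
  classical
  set q := p.toReal
  have hq : 1 ≤ q := (ENNReal.dichotomy p).resolve_left hp
  have hq₀ : 0 < q := by linarith
  refine thinness_le_of_forall (by positivity) fun n x hx ε hε => ?_
  obtain ⟨j, hj⟩ := (eventually_all.2 fun i =>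
    (tendsto_norm_apply_cofinite hq₀ (x i)).eventually_lt_const (half_pos hε)).exists
  obtain ⟨u, hu⟩ := exists_norm_eq (E j) zero_le_one
  refine ⟨lp.single p j u, by rw [lp.norm_single (zero_lt_one.trans_le Fact.out), hu],
    fun i => ?_⟩
  have hcoord : ‖x i j - u‖ ^ q ≤ (1 + ε / 2) ^ q :=
    Real.rpow_le_rpow (norm_nonneg _) ((norm_sub_le _ _).trans (by linarith [hj i])) hq₀.le
  have hbound : ‖x i - lp.single p j u‖ ^ q ≤ (2 ^ (1 / q) * (1 + ε / 2)) ^ q := by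
    have := norm_sub_single_rpow_add hq₀ (x i) j u
    rw [hx i, Real.one_rpow] at this
    rw [Real.mul_rpow (by positivity) (by positivity), ← Real.rpow_mul zero_le_two,
      one_div_mul_cancel hq₀.ne', Real.rpow_one]
    linarith [Real.one_le_rpow (by linarith : (1 : ℝ) ≤ 1 + ε / 2) hq₀.le,
      Real.rpow_nonneg (norm_nonneg (x i j)) q]
  have hroot : (2 : ℝ) ^ (1 / q) ≤ 2 := by
    simpa using Real.rpow_le_rpow_of_exponent_le one_le_two ((div_le_one hq₀).2 hq)
  have := (Real.rpow_le_rpow_iff (norm_nonneg _) (by positivity) hq₀).1 hbound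
  nlinarith

end lp

theorem thinness_lpSum_general (p : ℝ≥0∞) [Fact (1 ≤ p)] (hp : p ≠ ⊤)
    (X : ℕ → Type*) [∀ j, NormedAddCommGroup (X j)] [∀ j, NormedSpace ℝ (X j)]
    [∀ j, Nontrivial (X j)] :
    (⨆ j, ((thinness (X j) - 1) ^ p.toReal + 1) ^ (1 / p.toReal)) ≤ thinness (lp X p) ∧
      ((⨆ j, thinness (X j)) = 2 → thinness (lp X p) = 2 ^ (1 / p.toReal)) := by
  have hq₀ : 0 < p.toReal := by linarith [(ENNReal.dichotomy p).resolve_left hp]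
  have hlower := lp.le_thinness_lp (E := X) hp
  refine ⟨ciSup_le hlower, fun hsup => (lp.thinness_lp_le hp).antisymm ?_⟩
  have hcont : Continuous fun t : ℝ => ((t - 1) ^ p.toReal + 1) ^ (1 / p.toReal) :=
    (((_root_.continuous_sub_right 1).rpow_const fun _ => Or.inr hq₀.le).add
      continuous_const).rpow_const fun _ => Or.inr (by positivity)
  have hbdd : BddAbove (Set.range fun j => thinness (X j)) :=
    ⟨2, Set.forall_mem_range.2 fun j =>
      (exists_norm_eq (X j) zero_le_one).elim fun _ hu => thinness_le_two hu⟩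
  have hsup_mem : (⨆ j, thinness (X j)) ∈
      {t | ((t - 1) ^ p.toReal + 1) ^ (1 / p.toReal) ≤ thinness (lp X p)} :=
    closure_minimal (Set.range_subset_iff.2 hlower) (isClosed_le hcont continuous_const)
      (csSup_mem_closure (Set.range_nonempty _) hbdd)
  rw [hsup] at hsup_mem
  norm_num at hsup_mem
  rwa [one_div]

/-- For `1 ≤ p < ∞` and a sequence of nonzero Banach spaces `(X_j)`,
`t(ℓ_p(X_j)) ≥ sup_j ((t(X_j) - 1)^p + 1)^(1/p)`; moreover, if `sup_j t(X_j) = 2`, then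
`t(ℓ_p(X_j)) = 2^(1/p)`. -/
theorem thinness_lpSum (p : ℝ≥0∞) [Fact (1 ≤ p)] (hp : p ≠ ⊤)
    (X : ℕ → Type*) [∀ j, NormedAddCommGroup (X j)] [∀ j, NormedSpace ℝ (X j)]
    [∀ j, CompleteSpace (X j)] [∀ j, Nontrivial (X j)] :
    (⨆ j, ((thinness (X j) - 1) ^ p.toReal + 1) ^ (1 / p.toReal)) ≤ thinness (lp X p) ∧
      ((⨆ j, thinness (X j)) = 2 → thinness (lp X p) = 2 ^ (1 / p.toReal)) :=
  thinness_lpSum_general p hp X
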